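/- arXiv:0804.4391 — 2 statements merged into one kernel-verified Lean document; each statement's English description precedes it below -/
import Mathlib

section
/- For every z > 0, one has 0 < 1 − tanh(z)/z < 1, and the function z ↦ 1 − tanh(z)/z is strictly increasing on (0, ∞). -/
/-!
The function `tanh z / z` is the slope of the chord of `tanh` from `0` to `z`. Since
`tanh' = 1 / cosh ^ 2 < 1` away from `0`, this slope lies in `(0, 1)`; and its derivative
`(z / cosh z ^ 2 - tanh z) / z ^ 2` is negative because `z < sinh z * cosh z = sinh (2 z) / 2`.
-/

open Set

namespace Real

theorem hasDerivAt_tanh (x : ℝ) : HasDerivAt tanh (1 / cosh x ^ 2) x := by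
  have h := (hasDerivAt_sinh x).div (hasDerivAt_cosh x) (cosh_pos x).ne'
  rw [show tanh = sinh / cosh from funext tanh_eq_sinh_div_cosh]
  refine h.congr_deriv ?_
  rw [← sq, ← sq, cosh_sq]
  ring

theorem tanh_pos {x : ℝ} (hx : 0 < x) : 0 < tanh x := by
  rw [tanh_eq_sinh_div_cosh]
  exact div_pos (sinh_pos_iff.mpr hx) (cosh_pos x)

theorem tanh_lt_self {x : ℝ} (hx : 0 < x) : tanh x < x := by
  have hderiv (y : ℝ) : HasDerivAt (fun y => y - tanh y) (1 - 1 / cosh y ^ 2) y :=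
    (hasDerivAt_id' y).fun_sub (hasDerivAt_tanh y)
  have hmono : StrictMonoOn (fun y => y - tanh y) (Ici 0) := by
    refine strictMonoOn_of_deriv_pos (convex_Ici 0)
      (fun y _ => (hderiv y).continuousAt.continuousWithinAt) fun y hy => ?_
    rw [interior_Ici] at hy
    have hcosh : 1 < cosh y := one_lt_cosh.mpr hy.ne'
    rw [(hderiv y).deriv, sub_pos, div_lt_one (by positivity)]
    nlinarith
  simpa [tanh_zero] using hmono self_mem_Ici hx.le hx

theorem self_lt_sinh_mul_cosh {x : ℝ} (hx : 0 < x) : x < sinh x * cosh x := by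
  have h : 2 * x < sinh (2 * x) := self_lt_sinh_iff.mpr (by positivity)
  rw [sinh_two_mul] at h
  linarith

theorem hasDerivAt_tanh_div_self {x : ℝ} (hx : x ≠ 0) :
    HasDerivAt (fun y => tanh y / y) ((1 / cosh x ^ 2 * x - tanh x) / x ^ 2) x := by
  simpa only [mul_one] using (hasDerivAt_tanh x).fun_div (hasDerivAt_id' x) hx

theorem strictAntiOn_tanh_div_self : StrictAntiOn (fun x => tanh x / x) (Ioi 0) := by
  refine strictAntiOn_of_deriv_neg (convex_Ioi 0)
    (fun x hx => (hasDerivAt_tanh_div_self hx.ne').continuousAt.continuousWithinAt)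
    fun x hx => ?_
  rw [interior_Ioi] at hx
  rw [(hasDerivAt_tanh_div_self hx.ne').deriv]
  have hcosh := cosh_pos x
  refine div_neg_of_neg_of_pos ?_ (pow_pos hx 2)
  rw [sub_neg, tanh_eq_sinh_div_cosh, div_mul_eq_mul_div, one_mul,
    div_lt_div_iff₀ (by positivity) hcosh]
  nlinarith [self_lt_sinh_mul_cosh hx]

end Real

theorem stmt10 :
    (∀ z : ℝ, 0 < z → 0 < 1 - Real.tanh z / z ∧ 1 - Real.tanh z / z < 1) ∧
    StrictMonoOn (fun z : ℝ => 1 - Real.tanh z / z) (Set.Ioi 0) := by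
  refine ⟨fun z hz => ⟨?_, ?_⟩, fun a ha b hb hab => ?_⟩
  · exact sub_pos.mpr ((div_lt_one hz).mpr (Real.tanh_lt_self hz))
  · exact sub_lt_self 1 (div_pos (Real.tanh_pos hz) hz)
  · exact sub_lt_sub_left (Real.strictAntiOn_tanh_div_self ha hb hab) 1
end

section
/- Suppose for each N the Fisher information is J^{(N)}(θ) = N·J(θ) with J(θ) positive definite, and β_N = min_{b ∈ H¹} Z^{(N)}[b] where Z^{(N)}[b] = ∫[‖b‖² + Tr((I+∂b/∂θ)(N J(θ))⁻¹(I+∂b/∂θ)ᵀ)] dp(θ). Then the sequence {N β_N} is non-decreasing in N and bounded above by s = ∫Tr(J⁻¹(θ)) dp(θ); in particular N β_N ≤ s for all N. -/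
/-
Multiplying by `N` turns `Z^{(N)}[b]` into `∫ N‖b‖² + Tr((I + ∂b)J⁻¹(I + ∂b)ᵀ) dp`, which is
pointwise non-decreasing in `N`; taking infima over `b` gives monotonicity of `N β_N`, and the
competitor `b = 0` gives `N β_N ≤ ∫ Tr J⁻¹ dp = s`.
-/

open MeasureTheory Matrix
open scoped ENNReal

/-- Jacobian matrix of `b` at `θ`: entry `(i,j)` is `∂bᵢ/∂θⱼ`. -/
noncomputable def jac {n : ℕ} (b : (Fin n → ℝ) → (Fin n → ℝ)) (θ : Fin n → ℝ) :
    Matrix (Fin n) (Fin n) ℝ :=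
  fun i j => fderiv ℝ b θ (Pi.single j 1) i

/-- Squared Euclidean norm of a vector in `ℝⁿ`. -/
noncomputable def eNormSq {n : ℕ} (v : Fin n → ℝ) : ℝ := ∑ i, (v i) ^ 2

/-- The functional `Z^{(N)}[b]` with Fisher information `J^{(N)}(θ) = N · J(θ)`. -/
noncomputable def ZN {n : ℕ} (p : Measure (Fin n → ℝ))
    (J : (Fin n → ℝ) → Matrix (Fin n) (Fin n) ℝ) (N : ℕ)
    (b : (Fin n → ℝ) → (Fin n → ℝ)) : ℝ≥0∞ :=
  ∫⁻ θ, ENNReal.ofReal (eNormSq (b θ) +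
    ((1 + jac b θ) * ((N : ℝ) • J θ)⁻¹ * (1 + jac b θ)ᵀ).trace) ∂p

theorem Matrix.inv_smul_of_ne_zero {ι K : Type*} [Fintype ι] [DecidableEq ι] [Field K]
    {k : K} (hk : k ≠ 0) (A : Matrix ι ι K) : (k • A)⁻¹ = k⁻¹ • A⁻¹ := by
  by_cases hA : IsUnit A.det
  · simpa [Units.smul_def] using inv_smul' A (Units.mk0 k hk) hA
  · have hkA : ¬IsUnit (k • A).det := by
      simpa [det_smul, isUnit_iff_ne_zero, hk] using hA
    simp [nonsing_inv_apply_not_isUnit _ hA, nonsing_inv_apply_not_isUnit _ hkA]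

theorem eNormSq_nonneg {n : ℕ} (v : Fin n → ℝ) : 0 ≤ eNormSq v :=
  Finset.sum_nonneg fun i _ => sq_nonneg (v i)

theorem jac_const {n : ℕ} (c θ : Fin n → ℝ) : jac (fun _ => c) θ = 0 := by
  ext i j
  simp [jac]

section ZN

variable {n : ℕ} (p : Measure (Fin n → ℝ)) (J : (Fin n → ℝ) → Matrix (Fin n) (Fin n) ℝ)

theorem natCast_mul_ZN {N : ℕ} (hN : N ≠ 0) (b : (Fin n → ℝ) → (Fin n → ℝ)) :
    (N : ℝ≥0∞) * ZN p J N b =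
      ∫⁻ θ, ENNReal.ofReal (N * eNormSq (b θ) +
        ((1 + jac b θ) * (J θ)⁻¹ * (1 + jac b θ)ᵀ).trace) ∂p := by
  have hN' : (N : ℝ) ≠ 0 := Nat.cast_ne_zero.mpr hN
  rw [ZN, ← lintegral_const_mul' _ _ (ENNReal.natCast_ne_top N)]
  refine lintegral_congr fun θ => ?_
  rw [← ENNReal.ofReal_natCast, ← ENNReal.ofReal_mul N.cast_nonneg, inv_smul_of_ne_zero hN',
    Matrix.mul_smul, Matrix.smul_mul, trace_smul, smul_eq_mul, mul_add, mul_inv_cancel_left₀ hN']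

theorem natCast_mul_ZN_le_succ (N : ℕ) (b : (Fin n → ℝ) → (Fin n → ℝ)) :
    (N : ℝ≥0∞) * ZN p J N b ≤ ((N + 1 : ℕ) : ℝ≥0∞) * ZN p J (N + 1) b := by
  rcases eq_or_ne N 0 with rfl | hN
  · simp
  rw [natCast_mul_ZN p J hN, natCast_mul_ZN p J N.succ_ne_zero]
  refine lintegral_mono fun θ => ENNReal.ofReal_le_ofReal ?_
  gcongr
  · exact eNormSq_nonneg _
  · exact_mod_cast N.le_succ

theorem natCast_mul_ZN_zero {N : ℕ} (hN : N ≠ 0) :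
    (N : ℝ≥0∞) * ZN p J N (fun _ => 0) = ∫⁻ θ, ENNReal.ofReal ((J θ)⁻¹.trace) ∂p := by
  simp [natCast_mul_ZN p J hN, jac_const, eNormSq]

theorem natCast_mul_iInf_ZN_le_succ (N : ℕ) :
    (N : ℝ≥0∞) * ⨅ (b) (_ : Differentiable ℝ b), ZN p J N b ≤
      ((N + 1 : ℕ) : ℝ≥0∞) * ⨅ (b) (_ : Differentiable ℝ b), ZN p J (N + 1) b := by
  simp only [ENNReal.mul_iInf_of_ne (Nat.cast_ne_zero.mpr N.succ_ne_zero)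
    (ENNReal.natCast_ne_top _)]
  refine le_iInf₂ fun b hb => ?_
  calc (N : ℝ≥0∞) * ⨅ (b) (_ : Differentiable ℝ b), ZN p J N b
      ≤ N * ZN p J N b := by gcongr; exact iInf₂_le b hb
    _ ≤ _ := natCast_mul_ZN_le_succ p J N b

end ZN

theorem stmt18_general {n : ℕ} (p : Measure (Fin n → ℝ))
    (J : (Fin n → ℝ) → Matrix (Fin n) (Fin n) ℝ)
    (β : ℕ → ℝ≥0∞)
    (hβ : ∀ N, β N = ⨅ (b : (Fin n → ℝ) → (Fin n → ℝ)) (_ : Differentiable ℝ b),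
      ZN p J N b)
    (s : ℝ≥0∞) (hs : s = ∫⁻ θ, ENNReal.ofReal ((J θ)⁻¹.trace) ∂p) :
    (∀ N : ℕ, 1 ≤ N → (N : ℝ≥0∞) * β N ≤ ((N + 1 : ℕ) : ℝ≥0∞) * β (N + 1)) ∧
    (∀ N : ℕ, 1 ≤ N → (N : ℝ≥0∞) * β N ≤ s) := by
  refine ⟨fun N _ => ?_, fun N hN => ?_⟩
  · simpa only [hβ] using natCast_mul_iInf_ZN_le_succ p J N
  · calc (N : ℝ≥0∞) * β N ≤ N * ZN p J N (fun _ => 0) := by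
          gcongr
          exact hβ N ▸ iInf₂_le _ (differentiable_const 0)
      _ = s := hs ▸ natCast_mul_ZN_zero p J (Nat.one_le_iff_ne_zero.mp hN)

theorem stmt18 {n : ℕ} (p : Measure (Fin n → ℝ)) [IsProbabilityMeasure p]
    (J : (Fin n → ℝ) → Matrix (Fin n) (Fin n) ℝ)
    (hJ : ∀ᵐ θ ∂p, (J θ).PosDef)
    (β : ℕ → ℝ≥0∞)
    (hβ : ∀ N, β N = ⨅ (b : (Fin n → ℝ) → (Fin n → ℝ)) (_ : Differentiable ℝ b),
      ZN p J N b)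
    (s : ℝ≥0∞) (hs : s = ∫⁻ θ, ENNReal.ofReal ((J θ)⁻¹.trace) ∂p) :
    (∀ N : ℕ, 1 ≤ N → (N : ℝ≥0∞) * β N ≤ ((N + 1 : ℕ) : ℝ≥0∞) * β (N + 1)) ∧
    (∀ N : ℕ, 1 ≤ N → (N : ℝ≥0∞) * β N ≤ s) :=
  stmt18_general p J β hβ s hs
end
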